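/- Let K be a complete discrete valuation field with residue field k, U_K^1 = 1 + m_K the principal units, and U^mK₂(K) the subgroup of K₂(K) generated by symbols {u, f} with u ∈ U_K^m, f ∈ K×. Then there is an isomorphism U⁰K₂(K)/U¹K₂(K) ≅ K₂(k), deduced from the isomorphism K₂(K)/U¹K₂(K) ≅ K₂(k) ⊕ k× (with the k× factor given by the tame symbol ∂ and U⁰K₂(K) = Ker ∂). -/
import Mathlib


open scoped TensorProduct

/-- The Steinberg relations: the subgroup of `Kˣ ⊗ Kˣ` generated by `a ⊗ (1 - a)`. -/
def K2Rel (K : Type*) [Field K] :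
    Submodule ℤ (TensorProduct ℤ (Additive Kˣ) (Additive Kˣ)) :=
  Submodule.span ℤ {x | ∃ (a : Kˣ) (h : (a : K) ≠ 1),
    x = Additive.ofMul a ⊗ₜ[ℤ] Additive.ofMul (Units.mk0 (1 - (a : K)) (sub_ne_zero.mpr (Ne.symm h)))}

/-- The Milnor K-group `K₂(K) = (Kˣ ⊗_ℤ Kˣ)/⟨a ⊗ (1-a)⟩`. -/
abbrev K2 (K : Type*) [Field K] : Type _ :=
  TensorProduct ℤ (Additive Kˣ) (Additive Kˣ) ⧸ K2Rel K

/-- The symbol `{f, g} ∈ K₂(K)`. -/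
noncomputable def K2.symbol {K : Type*} [Field K] (f g : Kˣ) : K2 K :=
  Submodule.Quotient.mk (Additive.ofMul f ⊗ₜ[ℤ] Additive.ofMul g)

/-- `U¹K₂(K)`: the subgroup of `K₂(K)` generated by symbols `{u, f}` with `u` a
principal unit (`u ∈ O` with residue `1`). -/
noncomputable def U1K2 (K : Type*) [Field K] {k : Type*} [Field k]
    (O : Subring K) (r : O →+* k) : AddSubgroup (K2 K) :=
  AddSubgroup.closure {x | ∃ (u f : Kˣ) (hu : (u : K) ∈ O),
    r ⟨(u : K), hu⟩ = 1 ∧ x = K2.symbol u f}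

/-- Let `K` be a complete discrete valuation field with valuation ring `O` and residue
field `k`, and `∂ : K₂(K) → kˣ` the tame symbol with `U⁰K₂(K) = Ker ∂`.  From the
isomorphism `K₂(K)/U¹K₂(K) ≅ K₂(k) ⊕ kˣ` (in which the `kˣ`-component is given by `∂`)
one deduces an isomorphism `U⁰K₂(K)/U¹K₂(K) ≅ K₂(k)`. -/
theorem U0_mod_U1_iso_K2_residue
    {K k : Type*} [Field K] [UniformSpace K] [CompleteSpace K] [Field k]
    (v : Kˣ →* Multiplicative ℤ) (hv : Function.Surjective v)
    (O : Subring K) (hO : ∀ f : Kˣ, (f : K) ∈ O ↔ 0 ≤ Multiplicative.toAdd (v f))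
    (r : O →+* k) (hr : Function.Surjective r)
    (hker : ∀ (f : Kˣ) (h : (f : K) ∈ O),
      r ⟨(f : K), h⟩ = 0 ↔ 0 < Multiplicative.toAdd (v f))
    (d : K2 K →+ Additive kˣ)
    (hd : ∀ (f g : Kˣ)
        (h : (-1 : K) ^ (Multiplicative.toAdd (v f) * Multiplicative.toAdd (v g)) *
              (f : K) ^ (Multiplicative.toAdd (v g)) *
              (g : K) ^ (-(Multiplicative.toAdd (v f))) ∈ O),
        ((Additive.toMul (d (K2.symbol f g)) : kˣ) : k) =
          r ⟨(-1 : K) ^ (Multiplicative.toAdd (v f) * Multiplicative.toAdd (v g)) *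
              (f : K) ^ (Multiplicative.toAdd (v g)) *
              (g : K) ^ (-(Multiplicative.toAdd (v f))), h⟩)
    (σ : (K2 K ⧸ U1K2 K O r) ≃+ (K2 k × Additive kˣ))
    (hσ : ∀ x : K2 K, (σ (QuotientAddGroup.mk x)).2 = d x) :
    Nonempty ((AddSubgroup.map (QuotientAddGroup.mk' (U1K2 K O r)) d.ker) ≃+ K2 k) := by
  set H := AddSubgroup.map (QuotientAddGroup.mk' (U1K2 K O r)) d.ker with hH
  have hmem : ∀ q : K2 K ⧸ U1K2 K O r, q ∈ H ↔ (σ q).2 = 0 := by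
    intro q
    constructor
    · rintro ⟨x, hx, rfl⟩
      rw [show (QuotientAddGroup.mk' (U1K2 K O r)) x = QuotientAddGroup.mk x from rfl, hσ]
      exact hx
    · intro h
      obtain ⟨x, rfl⟩ := QuotientAddGroup.mk'_surjective (U1K2 K O r) q
      refine ⟨x, ?_, rfl⟩
      have := hσ x
      rw [show (QuotientAddGroup.mk x : K2 K ⧸ U1K2 K O r)
        = QuotientAddGroup.mk' (U1K2 K O r) x from rfl] at this
      simpa [AddMonoidHom.mem_ker, ← this] using h
  let f : H →+ K2 k :=
    ((AddMonoidHom.fst (K2 k) (Additive kˣ)).comp σ.toAddMonoidHom).comp H.subtype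
  have hbij : Function.Bijective f := by
    constructor
    · rintro ⟨q, hq⟩ ⟨q', hq'⟩ hfq
      have h2 : (σ q).2 = (σ q').2 := by
        rw [(hmem q).mp hq, (hmem q').mp hq']
      have h1 : (σ q).1 = (σ q').1 := hfq
      have : σ q = σ q' := Prod.ext h1 h2
      exact Subtype.ext (σ.injective this)
    · intro y
      have hq : σ.symm (y, 0) ∈ H := by
        rw [hmem]
        simp
      exact ⟨⟨σ.symm (y, 0), hq⟩, by simp [f]⟩
  exact ⟨AddEquiv.ofBijective f hbij⟩
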